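/- arXiv:1010.0829 — 6 statements merged into one kernel-verified Lean document; each statement's English description precedes it below -/
import Mathlib

section
/- Let f_{tT}(y;z) = (1/√(2π)) (c t (T−t)/T) · exp(−(c²(Ty−tz)²)/(2 y z (z−y))) / (y − y²/z)^{3/2} for 0 < y < z (the marginal density of a stable-1/2 bridge from 0 at time 0 to z > 0 at time T, with activity parameter c > 0, at time t ∈ (0,T)). Then for y ∈ (0,z), ∫₀^y f_{tT}(u;z) du = Φ(c(Ty−tz)/√(yz(z−y))) + (1 − 2t/T) e^{2c²t(T−t)/z} Φ(c((2t−T)y−tz)/√(yz(z−y))). -/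
open MeasureTheory Real Set

/-- Standard normal cumulative distribution function. -/
noncomputable def Phi (x : ℝ) : ℝ :=
  (Real.sqrt (2 * Real.pi))⁻¹ * ∫ u in Set.Iic x, Real.exp (-(u ^ 2) / 2)

/-- Marginal density at time `t` of the stable-1/2 bridge from `0` at time `0` to `z` at
time `T`, with activity parameter `c`. -/
noncomputable def stableBridgeDen (c T t z y : ℝ) : ℝ :=
  (1 / Real.sqrt (2 * Real.pi)) * (c * t * (T - t) / T) *
    (Real.exp (-(c ^ 2 * (T * y - t * z) ^ 2) / (2 * y * z * (z - y))) /
      (y - y ^ 2 / z) ^ ((3 : ℝ) / 2))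

/-!
Write `x_b(y) = c (b y - t z) / √(y z (z - y))`. Both `x_T` and `x_{2t-T}` tend to `-∞` as
`y → 0⁺`, so the right-hand side `F` tends to `0` there. Since
`x_{2t-T}² - x_T² = 4 c² t (T - t) / z`, the factor `exp (2 c² t (T - t) / z)` turns the Gaussian
density at `x_{2t-T}` into the one at `x_T`, and `F'` collapses to the bridge density. That density
is nonnegative, hence integrable, and the fundamental theorem of calculus concludes.
-/

open Filter Topology

lemma integrable_exp_neg_sq_div_two : Integrable fun u : ℝ => exp (-(u ^ 2) / 2) := by
  simpa [neg_div, div_eq_inv_mul] using integrable_exp_neg_mul_sq (by norm_num : (0 : ℝ) < 1 / 2)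

lemma hasDerivAt_Phi (x : ℝ) : HasDerivAt Phi ((√(2 * π))⁻¹ * exp (-(x ^ 2) / 2)) x := by
  have hint := integrable_exp_neg_sq_div_two.integrableOn (s := Iic (0 : ℝ))
  have hsplit : Phi = fun b => (√(2 * π))⁻¹ *
      ((∫ u in Iic (0 : ℝ), exp (-(u ^ 2) / 2)) + ∫ u in (0 : ℝ)..b, exp (-(u ^ 2) / 2)) := by
    funext b
    rw [Phi, ← intervalIntegral.integral_Iic_sub_Iic hint
      integrable_exp_neg_sq_div_two.integrableOn]
    ring
  have hcont : Continuous fun u : ℝ => exp (-(u ^ 2) / 2) := by fun_prop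
  rw [hsplit]
  exact ((intervalIntegral.integral_hasDerivAt_right
    integrable_exp_neg_sq_div_two.intervalIntegrable
    hcont.stronglyMeasurable.stronglyMeasurableAtFilter hcont.continuousAt).const_add _).const_mul _

lemma tendsto_Phi_atBot : Tendsto Phi atBot (𝓝 0) := by
  have h := (tendsto_integral_Iic_zero (f := fun u : ℝ => exp (-(u ^ 2) / 2))
    (μ := volume) tendsto_id).const_mul (√(2 * π))⁻¹
  rw [mul_zero] at h
  exact h

theorem integral_Ioo_eq_sub_of_hasDerivAt_of_tendsto {f F : ℝ → ℝ} {a b L : ℝ} (hab : a < b)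
    (hderiv : ∀ x ∈ Ioc a b, HasDerivAt F (f x) x) (hf : ∀ x ∈ Ioo a b, 0 ≤ f x)
    (hlim : Tendsto F (𝓝[>] a) (𝓝 L)) :
    ∫ x in Ioo a b, f x = F b - L := by
  classical
  set G := Function.update F a L with hG
  have hGF : ∀ x ≠ a, G =ᶠ[𝓝 x] F := fun x hx =>
    (eventually_ne_nhds hx).mono fun v hv => Function.update_of_ne hv _ _
  have hcont : ContinuousOn G (Icc a b) := by
    intro x hx
    rcases hx.1.eq_or_lt with rfl | hax
    · exact continuousWithinAt_update_same.2 <| hlim.mono_left <| nhdsWithin_mono _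
        fun v hv => lt_of_le_of_ne hv.1.1 (Ne.symm hv.2)
    · exact ((hderiv x ⟨hax, hx.2⟩).continuousAt.congr (hGF x hax.ne').symm).continuousWithinAt
  have hderivG : ∀ x ∈ Ioo a b, HasDerivAt G (f x) x := fun x hx =>
    (hderiv x (Ioo_subset_Ioc_self hx)).congr_of_eventuallyEq (hGF x hx.1.ne')
  rw [← integral_Ioc_eq_integral_Ioo, ← intervalIntegral.integral_of_le hab.le,
    intervalIntegral.integral_eq_sub_of_hasDeriv_right_of_le hab.le hcont
      (fun x hx => (hderivG x hx).hasDerivWithinAt)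
      ((intervalIntegrable_iff_integrableOn_Ioc_of_le hab.le).2
        (intervalIntegral.integrableOn_deriv_of_nonneg hcont hderivG hf)),
    hG, Function.update_of_ne hab.ne', Function.update_self]

noncomputable def bridgeArg (c b t z v : ℝ) : ℝ := c * (b * v - t * z) / √(v * z * (z - v))

lemma mul_mul_sub_pos {z u : ℝ} (hu : u ∈ Ioo 0 z) : 0 < u * z * (z - u) :=
  mul_pos (mul_pos hu.1 (hu.1.trans hu.2)) (sub_pos.2 hu.2)

lemma hasDerivAt_bridgeArg (c b t : ℝ) {z u : ℝ} (hu : u ∈ Ioo 0 z) :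
    HasDerivAt (bridgeArg c b t z)
      (c * z ^ 2 * ((b - 2 * t) * u + t * z) / (2 * √(u * z * (z - u)) ^ 3)) u := by
  have hA := mul_mul_sub_pos hu
  have hs : √(u * z * (z - u)) ≠ 0 := (Real.sqrt_pos.2 hA).ne'
  have hs2 : √(u * z * (z - u)) ^ 2 = u * z * (z - u) := Real.sq_sqrt hA.le
  have hnum : HasDerivAt (fun v => c * (b * v - t * z)) (c * b) u := by
    simpa using (((hasDerivAt_id u).const_mul b).sub_const (t * z)).const_mul c
  have hpoly : HasDerivAt (fun v => v * z * (z - v)) (z * z - 2 * z * u) u :=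
    (((hasDerivAt_id' u).mul_const z).mul ((hasDerivAt_id' u).const_sub z)).congr_deriv (by ring)
  refine (hnum.div (hpoly.sqrt hA.ne') hs).congr_deriv ?_
  field_simp
  rw [hs2]
  ring

lemma bridgeArg_sq_sub_bridgeArg_sq (c T t : ℝ) {z u : ℝ} (hu : u ∈ Ioo 0 z) :
    bridgeArg c (2 * t - T) t z u ^ 2 - bridgeArg c T t z u ^ 2 = 4 * c ^ 2 * t * (T - t) / z := by
  have hA := mul_mul_sub_pos hu
  have hz : z ≠ 0 := (hu.1.trans hu.2).ne'
  have hzu : z - u ≠ 0 := (sub_pos.2 hu.2).ne'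
  have hu0 : u ≠ 0 := hu.1.ne'
  simp only [bridgeArg, div_pow, Real.sq_sqrt hA.le]
  field_simp
  ring

lemma rpow_three_halves_sub_sq_div {z u : ℝ} (hu : u ∈ Ioo 0 z) :
    (u - u ^ 2 / z) ^ ((3 : ℝ) / 2) = √(u * z * (z - u)) ^ 3 / z ^ 3 := by
  have hz := hu.1.trans hu.2
  have hsq : u - u ^ 2 / z = (√(u * z * (z - u)) / z) ^ 2 := by
    rw [div_pow, Real.sq_sqrt (mul_mul_sub_pos hu).le]
    field_simp
  rw [hsq, ← Real.rpow_natCast, ← Real.rpow_mul (by positivity)]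
  norm_num [div_pow]

lemma stableBridgeDen_eq (c T t : ℝ) {z u : ℝ} (hu : u ∈ Ioo 0 z) :
    stableBridgeDen c T t z u = (√(2 * π))⁻¹ * exp (-(bridgeArg c T t z u ^ 2) / 2) *
      (c * t * (T - t) * z ^ 3 / (T * √(u * z * (z - u)) ^ 3)) := by
  have hA := mul_mul_sub_pos hu
  have hz : z ≠ 0 := (hu.1.trans hu.2).ne'
  have hexp : -(c ^ 2 * (T * u - t * z) ^ 2) / (2 * u * z * (z - u))
      = -(bridgeArg c T t z u ^ 2) / 2 := by
    rw [bridgeArg, div_pow, Real.sq_sqrt hA.le]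
    field_simp
  rw [stableBridgeDen, hexp, rpow_three_halves_sub_sq_div hu]
  field_simp

noncomputable def stableBridgeCDF (c T t z v : ℝ) : ℝ :=
  Phi (bridgeArg c T t z v) +
    (1 - 2 * t / T) * exp (2 * c ^ 2 * t * (T - t) / z) * Phi (bridgeArg c (2 * t - T) t z v)

lemma hasDerivAt_stableBridgeCDF (c : ℝ) {T t z u : ℝ} (hT : T ≠ 0) (hu : u ∈ Ioo 0 z) :
    HasDerivAt (stableBridgeCDF c T t z) (stableBridgeDen c T t z u) u := by
  have hz : z ≠ 0 := (hu.1.trans hu.2).ne'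
  have hs : √(u * z * (z - u)) ≠ 0 := (Real.sqrt_pos.2 (mul_mul_sub_pos hu)).ne'
  have hexp : exp (2 * c ^ 2 * t * (T - t) / z) * exp (-(bridgeArg c (2 * t - T) t z u ^ 2) / 2)
      = exp (-(bridgeArg c T t z u ^ 2) / 2) := by
    rw [← exp_add]
    congr 1
    linear_combination (-1 / 2) * bridgeArg_sq_sub_bridgeArg_sq c T t hu
  have h₁ := (hasDerivAt_Phi _).comp u (hasDerivAt_bridgeArg c T t hu)
  have h₂ := (hasDerivAt_Phi _).comp u (hasDerivAt_bridgeArg c (2 * t - T) t hu)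
  refine (h₁.add (h₂.const_mul ((1 - 2 * t / T) * exp (2 * c ^ 2 * t * (T - t) / z)))).congr_deriv ?_
  rw [stableBridgeDen_eq c T t hu, ← hexp]
  field_simp
  ring

lemma tendsto_bridgeArg_atBot {c t z : ℝ} (hc : 0 < c) (ht : 0 < t) (hz : 0 < z) (b : ℝ) :
    Tendsto (bridgeArg c b t z) (𝓝[>] 0) atBot := by
  have hcont : Continuous fun v : ℝ => c * (b * v - t * z) := by fun_prop
  have hnum := (hcont.tendsto 0).mono_left (nhdsWithin_le_nhds (s := Ioi 0))
  have hsqrt : Tendsto (fun v => √(v * z * (z - v))) (𝓝[>] 0) (𝓝[>] 0) := by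
    have hcont' : Continuous fun v : ℝ => √(v * z * (z - v)) := by fun_prop
    refine tendsto_nhdsWithin_iff.2 ⟨?_, ?_⟩
    · simpa using (hcont'.tendsto 0).mono_left nhdsWithin_le_nhds
    · filter_upwards [Ioo_mem_nhdsGT hz] with v hv
      exact Real.sqrt_pos.2 (mul_mul_sub_pos hv)
  unfold bridgeArg
  simpa only [div_eq_mul_inv, Function.comp_def] using
    hnum.neg_mul_atTop (by nlinarith [mul_pos ht hz]) (tendsto_inv_nhdsGT_zero.comp hsqrt)

lemma tendsto_stableBridgeCDF_nhdsGT_zero {c T t z : ℝ} (hc : 0 < c) (ht : 0 < t) (hz : 0 < z) :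
    Tendsto (stableBridgeCDF c T t z) (𝓝[>] 0) (𝓝 0) := by
  have h := (tendsto_Phi_atBot.comp (tendsto_bridgeArg_atBot hc ht hz T)).add
    ((tendsto_Phi_atBot.comp (tendsto_bridgeArg_atBot hc ht hz (2 * t - T))).const_mul
      ((1 - 2 * t / T) * exp (2 * c ^ 2 * t * (T - t) / z)))
  rw [mul_zero, add_zero] at h
  exact h

/-- Distribution function of the stable-1/2 bridge marginal. -/
theorem stable_half_bridge_distribution_function (c T t z : ℝ)
    (hc : 0 < c) (ht : 0 < t) (htT : t < T) (hz : 0 < z)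
    (y : ℝ) (hy : y ∈ Set.Ioo 0 z) :
    (∫ u in Set.Ioo (0 : ℝ) y, stableBridgeDen c T t z u)
      = Phi (c * (T * y - t * z) / Real.sqrt (y * z * (z - y)))
        + (1 - 2 * t / T) * Real.exp (2 * c ^ 2 * t * (T - t) / z) *
            Phi (c * ((2 * t - T) * y - t * z) / Real.sqrt (y * z * (z - y))) := by
  have hT : 0 < T := ht.trans htT
  have hIoc : ∀ u ∈ Ioc 0 y, u ∈ Ioo 0 z := fun u hu => ⟨hu.1, hu.2.trans_lt hy.2⟩
  have hden_nonneg : ∀ u ∈ Ioo 0 y, 0 ≤ stableBridgeDen c T t z u := fun u hu => by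
    have := sub_pos.2 htT
    rw [stableBridgeDen_eq c T t (hIoc u (Ioo_subset_Ioc_self hu))]
    positivity
  rw [integral_Ioo_eq_sub_of_hasDerivAt_of_tendsto hy.1
    (fun u hu => hasDerivAt_stableBridgeCDF c hT.ne' (hIoc u hu)) hden_nonneg
    (tendsto_stableBridgeCDF_nhdsGT_zero hc ht hz), sub_zero]
  rfl
end

section
/- Let f_{tT}(y;z) = (ct(T−t)/(πT))(z² + c²T²)/((y² + c²t²)((z−y)² + c²(T−t)²)) be the Cauchy bridge density. Then ∫_{−∞}^∞ y f_{tT}(y;z) dy = (t/T) z. -/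
open MeasureTheory Real Set

/-- Marginal density at time `t` of a Cauchy bridge from `0` at time `0` to `z` at
time `T`, with scale parameter `c`. -/
noncomputable def cauchyBridgeDen (c T t z y : ℝ) : ℝ :=
  (c * t * (T - t) / (Real.pi * T)) *
    ((z ^ 2 + c ^ 2 * T ^ 2) /
      ((y ^ 2 + c ^ 2 * t ^ 2) * ((z - y) ^ 2 + c ^ 2 * (T - t) ^ 2)))

/-!
With `a = c t` and `b = c (T - t)` the first moment is a constant multiple of
`∫ y / ((y² + a²) ((y - z)² + b²)) dy`. Partial fractions give a primitive made of
`log ((y² + a²) / ((y - z)² + b²))`, which tends to `0` at `±∞`, and of `arctan (y / a)` and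
`arctan ((y - z) / b)`, each of which increases by `π` over the whole line. The integral is therefore
`π z / (b (z² + (a + b)²))`, and since `a + b = c T` the factor `z² + c² T²` of the density
cancels. For `z = 0` the integrand is odd.
-/

open Filter Topology Bornology

theorem Function.Odd.integral_eq_zero {G E : Type*} [MeasurableSpace G] [AddGroup G]
    [MeasurableNeg G] [NormedAddCommGroup E] [NormedSpace ℝ E] {μ : Measure G}
    [μ.IsNegInvariant] {f : G → E} (hf : Function.Odd f) : ∫ x, f x ∂μ = 0 := by
  have h := integral_neg_eq_self f μ
  rw [show (fun x => f (-x)) = fun x => -f x from funext hf, integral_neg,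
    neg_eq_iff_add_eq_zero, ← two_smul ℝ, smul_eq_zero] at h
  exact h.resolve_left two_ne_zero

section FirstMomentIntegral

variable {a b : ℝ}

theorem integrable_inv_sub_sq_add_sq (z : ℝ) (hb : b ≠ 0) :
    Integrable fun y : ℝ => ((y - z) ^ 2 + b ^ 2)⁻¹ := by
  refine (((integrable_inv_one_add_sq.comp_div hb).comp_sub_right z).const_mul (b ^ 2)⁻¹).congr
    (ae_of_all _ fun y => ?_)
  field_simp
  ring

theorem integrable_div_mul_sq_add_sq (z : ℝ) (ha : 0 < a) (hb : b ≠ 0) :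
    Integrable fun y : ℝ => y / ((y ^ 2 + a ^ 2) * ((y - z) ^ 2 + b ^ 2)) := by
  refine ((integrable_inv_sub_sq_add_sq z hb).const_mul (1 / (2 * a))).mono'
    (continuous_id.div (by fun_prop) fun y => by positivity).aestronglyMeasurable
    (ae_of_all _ fun y => ?_)
  have hden : 0 < (y ^ 2 + a ^ 2) * ((y - z) ^ 2 + b ^ 2) := by positivity
  have amgm : |y| / (y ^ 2 + a ^ 2) ≤ 1 / (2 * a) := by
    rw [div_le_div_iff₀ (by positivity) (by positivity)]
    nlinarith [sq_nonneg (|y| - a), sq_abs y]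
  rw [Real.norm_eq_abs, abs_div, abs_of_pos hden, ← div_div, div_eq_mul_inv]
  exact mul_le_mul_of_nonneg_right amgm (by positivity)

theorem tendsto_log_div_sq_add_sq_cobounded (a z : ℝ) (hb : b ≠ 0) :
    Tendsto (fun y : ℝ => log ((y ^ 2 + a ^ 2) / ((y - z) ^ 2 + b ^ 2))) (cobounded ℝ)
      (𝓝 0) := by
  have hinv := tendsto_inv₀_cobounded (α := ℝ)
  have hratio := ((tendsto_const_nhds (x := (1 : ℝ))).add ((hinv.const_mul a).pow 2)).div
    ((((tendsto_const_nhds (x := (1 : ℝ))).sub (hinv.const_mul z)).pow 2).add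
      ((hinv.const_mul b).pow 2))
    (by norm_num : ((1 : ℝ) - z * 0) ^ 2 + (b * 0) ^ 2 ≠ 0)
  simp only [mul_zero, sub_zero, ne_eq, OfNat.ofNat_ne_zero, not_false_eq_true, zero_pow,
    add_zero, one_pow, div_one] at hratio
  rw [← log_one]
  refine ((continuousAt_log one_ne_zero).tendsto.comp hratio).congr' ?_
  filter_upwards [eventually_ne_cobounded 0] with y hy
  have hB : (y - z) ^ 2 + b ^ 2 ≠ 0 := by positivity
  simp only [Function.comp_apply, Pi.div_apply]
  congr 1
  field_simp

theorem tendsto_arctan_sub_div_atTop (z : ℝ) (hb : 0 < b) :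
    Tendsto (fun y : ℝ => arctan ((y - z) / b)) atTop (𝓝 (π / 2)) :=
  tendsto_nhds_of_tendsto_nhdsWithin <| tendsto_arctan_atTop.comp <|
    (tendsto_atTop_add_const_right _ (-z) tendsto_id).atTop_div_const hb

theorem tendsto_arctan_sub_div_atBot (z : ℝ) (hb : 0 < b) :
    Tendsto (fun y : ℝ => arctan ((y - z) / b)) atBot (𝓝 (-(π / 2))) :=
  tendsto_nhds_of_tendsto_nhdsWithin <| tendsto_arctan_atBot.comp <|
    (tendsto_atBot_add_const_right _ (-z) tendsto_id).atBot_div_const hb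

/-- The denominator `(z ^ 2 + (a + b) ^ 2) * (z ^ 2 + (a - b) ^ 2)` is the resultant of
`y ^ 2 + a ^ 2` and `(y - z) ^ 2 + b ^ 2`; it vanishes only when `z = 0` and `a ^ 2 = b ^ 2`. -/
noncomputable def firstMomentPrimitive (a b z y : ℝ) : ℝ :=
  ((z ^ 2 + b ^ 2 - a ^ 2) / 2 * log ((y ^ 2 + a ^ 2) / ((y - z) ^ 2 + b ^ 2))
    - 2 * z * a * arctan (y / a) + z * (z ^ 2 + a ^ 2 + b ^ 2) / b * arctan ((y - z) / b))
    / ((z ^ 2 + (a + b) ^ 2) * (z ^ 2 + (a - b) ^ 2))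

theorem hasDerivAt_firstMomentPrimitive {z : ℝ} (ha : a ≠ 0) (hb : b ≠ 0) (hz : z ≠ 0)
    (y : ℝ) :
    HasDerivAt (firstMomentPrimitive a b z)
      (y / ((y ^ 2 + a ^ 2) * ((y - z) ^ 2 + b ^ 2))) y := by
  have hA : 0 < y ^ 2 + a ^ 2 := by positivity
  have hB : 0 < (y - z) ^ 2 + b ^ 2 := by positivity
  have hD : 0 < (z ^ 2 + (a + b) ^ 2) * (z ^ 2 + (a - b) ^ 2) := by positivity
  have dA : HasDerivAt (fun y => y ^ 2 + a ^ 2) (2 * y) y := by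
    simpa using (hasDerivAt_pow 2 y).add_const (a ^ 2)
  have dB : HasDerivAt (fun y => (y - z) ^ 2 + b ^ 2) (2 * (y - z)) y := by
    simpa using (((hasDerivAt_id' y).sub_const z).pow 2).add_const (b ^ 2)
  have dlog : HasDerivAt (fun y => log ((y ^ 2 + a ^ 2) / ((y - z) ^ 2 + b ^ 2)))
      (2 * y / (y ^ 2 + a ^ 2) - 2 * (y - z) / ((y - z) ^ 2 + b ^ 2)) y :=
    ((dA.div dB hB.ne').log (div_pos hA hB).ne').congr_deriv
      (by simp only [Pi.div_apply]; field_simp)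
  have darctan₁ : HasDerivAt (fun y => arctan (y / a)) (a / (y ^ 2 + a ^ 2)) y :=
    ((hasDerivAt_id' y).div_const a).arctan.congr_deriv (by field_simp; ring)
  have darctan₂ : HasDerivAt (fun y => arctan ((y - z) / b)) (b / ((y - z) ^ 2 + b ^ 2)) y :=
    (((hasDerivAt_id' y).sub_const z).div_const b).arctan.congr_deriv (by field_simp; ring)
  refine ((((dlog.const_mul _).sub (darctan₁.const_mul _)).add
    (darctan₂.const_mul _)).div_const _).congr_deriv ?_
  field_simp
  ring

theorem tendsto_firstMomentPrimitive {z : ℝ} {l : Filter ℝ} (hl : l ≤ cobounded ℝ) (hb : b ≠ 0)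
    {s : ℝ} (h₁ : Tendsto (fun y => arctan (y / a)) l (𝓝 s))
    (h₂ : Tendsto (fun y => arctan ((y - z) / b)) l (𝓝 s)) :
    Tendsto (firstMomentPrimitive a b z) l (𝓝 ((z * (z ^ 2 + a ^ 2 + b ^ 2) / b - 2 * z * a) * s
      / ((z ^ 2 + (a + b) ^ 2) * (z ^ 2 + (a - b) ^ 2)))) := by
  have hlog := (tendsto_log_div_sq_add_sq_cobounded a z hb).mono_left hl
  have h := (((hlog.const_mul ((z ^ 2 + b ^ 2 - a ^ 2) / 2)).sub
    (h₁.const_mul (2 * z * a))).add (h₂.const_mul (z * (z ^ 2 + a ^ 2 + b ^ 2) / b))).div_const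
    ((z ^ 2 + (a + b) ^ 2) * (z ^ 2 + (a - b) ^ 2))
  rwa [mul_zero, zero_sub, neg_add_eq_sub, ← sub_mul] at h

theorem integral_div_mul_sq_add_sq (z : ℝ) (ha : 0 < a) (hb : 0 < b) :
    ∫ y : ℝ, y / ((y ^ 2 + a ^ 2) * ((y - z) ^ 2 + b ^ 2))
      = π * z / (b * (z ^ 2 + (a + b) ^ 2)) := by
  rcases eq_or_ne z 0 with rfl | hz
  · rw [Function.Odd.integral_eq_zero fun y => by ring]
    simp
  have htop := tendsto_firstMomentPrimitive (z := z) IsOrderBornology.atTop_le_cobounded hb.ne'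
    (by simpa using tendsto_arctan_sub_div_atTop 0 ha) (tendsto_arctan_sub_div_atTop z hb)
  have hbot := tendsto_firstMomentPrimitive (z := z) IsOrderBornology.atBot_le_cobounded hb.ne'
    (by simpa using tendsto_arctan_sub_div_atBot 0 ha) (tendsto_arctan_sub_div_atBot z hb)
  rw [integral_of_hasDerivAt_of_tendsto (hasDerivAt_firstMomentPrimitive ha.ne' hb.ne' hz)
    (integrable_div_mul_sq_add_sq z ha hb.ne') hbot htop]
  have hD : 0 < z ^ 2 + (a - b) ^ 2 := by positivity
  field_simp
  ring

end FirstMomentIntegral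

/-- First moment of the Cauchy bridge marginal. -/
theorem cauchy_bridge_first_moment (c T t z : ℝ)
    (hc : 0 < c) (ht : 0 < t) (htT : t < T) :
    (∫ y : ℝ, y * cauchyBridgeDen c T t z y) = (t / T) * z := by
  have hTt : 0 < T - t := sub_pos.mpr htT
  have hT : 0 < T := ht.trans htT
  have hfactor : ∀ y, y * cauchyBridgeDen c T t z y
      = c * t * (T - t) / (π * T) * (z ^ 2 + (c * T) ^ 2) *
        (y / ((y ^ 2 + (c * t) ^ 2) * ((y - z) ^ 2 + (c * (T - t)) ^ 2))) := fun y => by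
    simp only [cauchyBridgeDen]
    ring
  simp_rw [hfactor]
  rw [integral_const_mul, integral_div_mul_sq_add_sq z (by positivity) (by positivity),
    show c * t + c * (T - t) = c * T by ring]
  field_simp
end

section
/- For the Cauchy bridge density f_{tT}(y;z) as above, ∫_{−∞}^∞ |y|^p f_{tT}(y;z) dy < ∞ for all p ∈ (0,3), while ∫_{−∞}^∞ |y|³ f_{tT}(y;z) dy = ∞. -/
open MeasureTheory Real Set

/-!
The density is a positive constant divided by the quartic `(y² + A)((z - y)² + B)`, and this
quartic is comparable, up to positive constants, to `(1 + |y|)⁴` uniformly in `y`. Hence the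
`p`-th absolute moment is finite exactly when `|y|^p / (1 + |y|)⁴` is integrable, that is,
when `p + 1 < 4`; for `p = 3` the integrand behaves like `1 / |y|` at infinity.
-/

lemma integrable_abs_rpow_div_one_add_abs_pow_iff {p : ℝ} (hp : 0 ≤ p) (n : ℕ) :
    Integrable (fun y : ℝ => |y| ^ p / (1 + |y|) ^ n) ↔ p + 1 < n := by
  constructor
  · intro h
    have hIoi : IntegrableOn (fun y : ℝ => y ^ (p - n)) (Ioi 1) := by
      refine (h.const_mul (2 ^ n)).integrableOn.mono'
        (by fun_prop : Measurable fun y : ℝ => y ^ (p - n)).aestronglyMeasurable ?_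
      refine (ae_restrict_iff' measurableSet_Ioi).2 (.of_forall fun y (hy : 1 < y) => ?_)
      have hy0 : 0 < y := zero_lt_one.trans hy
      rw [norm_of_nonneg (by positivity), abs_of_pos hy0, rpow_sub hy0, rpow_natCast]
      calc y ^ p / y ^ n = 2 ^ n * y ^ p / (2 * y) ^ n := by
            rw [mul_pow]; field_simp
        _ ≤ 2 ^ n * y ^ p / (1 + y) ^ n := by gcongr; linarith
        _ = 2 ^ n * (y ^ p / (1 + y) ^ n) := mul_div_assoc _ _ _
    linarith [(integrableOn_Ioi_rpow_iff zero_lt_one).1 hIoi]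
  · intro h
    have hr : (Module.finrank ℝ ℝ : ℝ) < n - p := by simp; linarith
    refine (integrable_one_add_norm (μ := volume) hr).mono'
      (by fun_prop : Measurable _).aestronglyMeasurable (.of_forall fun y => ?_)
    have hy : 0 < 1 + |y| := by positivity
    rw [norm_of_nonneg (by positivity), norm_eq_abs, neg_sub, rpow_sub hy, rpow_natCast]
    gcongr
    linarith [abs_nonneg y]

section Quartic

variable {A B : ℝ}

lemma mul_le_one_add_abs_pow_four (hA : 0 ≤ A) (hB : 0 ≤ B) (z y : ℝ) :
    (y ^ 2 + A) * ((z - y) ^ 2 + B) ≤ (1 + A) * (2 * z ^ 2 + 2 + B) * (1 + |y|) ^ 4 := by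
  have hy : y ^ 2 ≤ (1 + |y|) ^ 2 := by nlinarith [sq_abs y, abs_nonneg y]
  have hy1 : 1 ≤ (1 + |y|) ^ 2 := by nlinarith [abs_nonneg y]
  have hA1 := mul_le_mul_of_nonneg_left hy1 hA
  have hB1 := mul_le_mul_of_nonneg_left hy1 hB
  have hz1 := mul_le_mul_of_nonneg_left hy1 (sq_nonneg z)
  calc (y ^ 2 + A) * ((z - y) ^ 2 + B)
      ≤ ((1 + A) * (1 + |y|) ^ 2) * ((2 * z ^ 2 + 2 + B) * (1 + |y|) ^ 2) := by
        gcongr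
        · linarith
        · nlinarith [sq_nonneg (z + y)]
    _ = _ := by ring

lemma one_add_abs_pow_four_le_mul (hA : 0 < A) (hB : 0 < B) (z y : ℝ) :
    A * B * (1 + |y|) ^ 4 ≤
      8 * (1 + z ^ 2) * ((1 + A) * (1 + B)) * ((y ^ 2 + A) * ((z - y) ^ 2 + B)) := by
  have habs : (1 + |y|) ^ 2 ≤ 2 * (1 + y ^ 2) := by nlinarith [sq_abs y, sq_nonneg (1 - |y|)]
  have hpeetre : 1 + y ^ 2 ≤ 2 * (1 + z ^ 2) * (1 + (z - y) ^ 2) := by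
    nlinarith [sq_nonneg (2 * z - y), mul_nonneg (sq_nonneg z) (sq_nonneg (z - y))]
  have hA' : A * (1 + y ^ 2) ≤ (1 + A) * (y ^ 2 + A) := by nlinarith [sq_nonneg y]
  have hB' : B * (1 + (z - y) ^ 2) ≤ (1 + B) * ((z - y) ^ 2 + B) := by
    nlinarith [sq_nonneg (z - y)]
  have hyA : A * (1 + |y|) ^ 2 ≤ 2 * ((1 + A) * (y ^ 2 + A)) := by nlinarith
  have hyB : B * (1 + |y|) ^ 2 ≤ 4 * (1 + z ^ 2) * ((1 + B) * ((z - y) ^ 2 + B)) := by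
    nlinarith [mul_le_mul_of_nonneg_left hpeetre hB.le,
      mul_le_mul_of_nonneg_left hB' (by positivity : (0 : ℝ) ≤ 1 + z ^ 2)]
  calc A * B * (1 + |y|) ^ 4 = (A * (1 + |y|) ^ 2) * (B * (1 + |y|) ^ 2) := by ring
    _ ≤ (2 * ((1 + A) * (y ^ 2 + A))) * (4 * (1 + z ^ 2) * ((1 + B) * ((z - y) ^ 2 + B))) :=
        mul_le_mul hyA hyB (by positivity) (by positivity)
    _ = _ := by ring

end Quartic

section CauchyBridgeDen

variable {c T t : ℝ}

lemma cauchyBridgeDen_eq_div (hc : 0 < c) (ht : 0 < t) (htT : t < T) (z : ℝ) :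
    ∃ D A B : ℝ, 0 < D ∧ 0 < A ∧ 0 < B ∧
      ∀ y, cauchyBridgeDen c T t z y = D / ((y ^ 2 + A) * ((z - y) ^ 2 + B)) := by
  have hT : 0 < T := ht.trans htT
  have hTt : 0 < T - t := sub_pos.2 htT
  refine ⟨c * t * (T - t) / (π * T) * (z ^ 2 + c ^ 2 * T ^ 2), c ^ 2 * t ^ 2,
    c ^ 2 * (T - t) ^ 2, by positivity, by positivity, by positivity, fun y => ?_⟩
  rw [cauchyBridgeDen, ← mul_div_assoc]

lemma continuous_cauchyBridgeDen (hc : 0 < c) (ht : 0 < t) (htT : t < T) (z : ℝ) :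
    Continuous (cauchyBridgeDen c T t z) := by
  obtain ⟨D, A, B, -, hA, hB, hf⟩ := cauchyBridgeDen_eq_div hc ht htT z
  rw [funext hf]
  exact continuous_const.div (by fun_prop) fun y => by positivity

lemma cauchyBridgeDen_nonneg (hc : 0 < c) (ht : 0 < t) (htT : t < T) (z y : ℝ) :
    0 ≤ cauchyBridgeDen c T t z y := by
  obtain ⟨D, A, B, hD, hA, hB, hf⟩ := cauchyBridgeDen_eq_div hc ht htT z
  rw [hf]
  positivity

lemma exists_cauchyBridgeDen_le (hc : 0 < c) (ht : 0 < t) (htT : t < T) (z : ℝ) :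
    ∃ K, ∀ y, cauchyBridgeDen c T t z y ≤ K / (1 + |y|) ^ 4 := by
  obtain ⟨D, A, B, hD, hA, hB, hf⟩ := cauchyBridgeDen_eq_div hc ht htT z
  refine ⟨8 * (1 + z ^ 2) * ((1 + A) * (1 + B)) * D / (A * B), fun y => ?_⟩
  have hQ : 0 < (y ^ 2 + A) * ((z - y) ^ 2 + B) := by positivity
  rw [hf, div_le_div_iff₀ hQ (by positivity), div_mul_eq_mul_div, le_div_iff₀ (by positivity)]
  nlinarith [mul_le_mul_of_nonneg_left (one_add_abs_pow_four_le_mul hA hB z y) hD.le]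

lemma exists_pos_le_cauchyBridgeDen (hc : 0 < c) (ht : 0 < t) (htT : t < T) (z : ℝ) :
    ∃ k > 0, ∀ y, k / (1 + |y|) ^ 4 ≤ cauchyBridgeDen c T t z y := by
  obtain ⟨D, A, B, hD, hA, hB, hf⟩ := cauchyBridgeDen_eq_div hc ht htT z
  refine ⟨D / ((1 + A) * (2 * z ^ 2 + 2 + B)), by positivity, fun y => ?_⟩
  rw [hf, div_div]
  exact div_le_div_of_nonneg_left hD.le (by positivity)
    (by linarith [mul_le_one_add_abs_pow_four hA.le hB.le z y])

end CauchyBridgeDen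

/-- Moments of the Cauchy bridge: `∫ |y|^p f_{tT}(y;z) dy < ∞` for `0 < p < 3`,
while `∫ |y|^3 f_{tT}(y;z) dy = ∞`. -/
theorem cauchy_bridge_moments (c T t z : ℝ)
    (hc : 0 < c) (ht : 0 < t) (htT : t < T) :
    (∀ p : ℝ, 0 < p → p < 3 →
        (∫⁻ y : ℝ, ENNReal.ofReal (|y| ^ p * cauchyBridgeDen c T t z y)) < ⊤) ∧
      (∫⁻ y : ℝ, ENNReal.ofReal (|y| ^ (3 : ℝ) * cauchyBridgeDen c T t z y)) = ⊤ := by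
  have hf0 := cauchyBridgeDen_nonneg hc ht htT z
  have hmeas (p : ℝ) (hp : 0 ≤ p) :
      AEStronglyMeasurable fun y : ℝ => |y| ^ p * cauchyBridgeDen c T t z y :=
    ((continuous_abs.rpow_const fun _ => Or.inr hp).mul
      (continuous_cauchyBridgeDen hc ht htT z)).aestronglyMeasurable
  obtain ⟨K, hK⟩ := exists_cauchyBridgeDen_le hc ht htT z
  obtain ⟨k, hk, hk'⟩ := exists_pos_le_cauchyBridgeDen hc ht htT z
  refine ⟨fun p hp hp3 => ?_, ?_⟩
  · have hweight := (integrable_abs_rpow_div_one_add_abs_pow_iff hp.le 4).2 (by push_cast; linarith)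
    refine ((hweight.const_mul K).mono' (hmeas p hp.le) (.of_forall fun y => ?_)).lintegral_lt_top
    rw [norm_of_nonneg (by positivity [hf0 y]), mul_div_left_comm]
    exact mul_le_mul_of_nonneg_left (hK y) (by positivity)
  · by_contra h
    have hint := (lintegral_ofReal_ne_top_iff_integrable (hmeas 3 zero_le_three)
      (.of_forall fun y => by positivity [hf0 y])).1 h
    have hweight : Integrable fun y : ℝ => |y| ^ (3 : ℝ) / (1 + |y|) ^ 4 := by
      refine (hint.const_mul k⁻¹).mono' (by fun_prop : Measurable _).aestronglyMeasurable
        (.of_forall fun y => ?_)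
      rw [norm_of_nonneg (by positivity), le_inv_mul_iff₀ hk, mul_div_left_comm]
      exact mul_le_mul_of_nonneg_left (hk' y) (by positivity)
    have := (integrable_abs_rpow_div_one_add_abs_pow_iff zero_le_three 4).1 hweight
    norm_num at this
end

section
/- Suppose f_t are the marginal densities of a Lévy process on [0,T] and there exist constants C, K < ∞ and β > 0 such that |x|^{1+β} f_t(x) < K for all |x| ≥ C and all t ∈ (0,T]. Then for every α ∈ (0,β), every t ∈ (0,T), and every z with 0 < f_T(z) < ∞, the bridge marginal density f_{tT}(x;z) = f_t(x)f_{T−t}(z−x)/f_T(z) satisfies ∫_{−∞}^∞ |x|^{1+2α} f_{tT}(x;z) dx < ∞. -/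
/-!
Write `P x = f_t(x) f_{T-t}(z - x)`. By Chapman–Kolmogorov `∫ P = f_T(z) ≠ 0`, so `P` is
integrable, and the continuous weight `|x|^{1+2α}` keeps it locally integrable. Away from a
compact set the tail bound gives `f_s(x) = O((1+|x|)^{-(1+β)})`, and Peetre's inequality
transports this decay to `x ↦ f_{T-t}(z - x)`; hence the integrand is
`O((1+|x|)^{(1+2α) - 2(1+β)})`, which is integrable on `ℝ` because `α < β`.
-/

open MeasureTheory Real Set Filter Asymptotics

section JapaneseBracket

variable {γ : ℝ}

lemma abs_rpow_neg_le_two_rpow_mul_one_add_abs_rpow_neg (hγ : 0 ≤ γ) {x : ℝ}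
    (hx : 1 ≤ |x|) :
    |x| ^ (-γ) ≤ 2 ^ γ * (1 + |x|) ^ (-γ) := by
  have hdouble : (2 * |x|) ^ (-γ) ≤ (1 + |x|) ^ (-γ) :=
    rpow_le_rpow_of_nonpos (by positivity) (by linarith) (neg_nonpos.mpr hγ)
  calc |x| ^ (-γ) = 2 ^ γ * (2 * |x|) ^ (-γ) := by
        rw [mul_rpow zero_le_two (abs_nonneg x), ← mul_assoc, ← rpow_add zero_lt_two,
          add_neg_cancel, rpow_zero, one_mul]
    _ ≤ 2 ^ γ * (1 + |x|) ^ (-γ) := by gcongr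

/-- Peetre's inequality. -/
lemma one_add_abs_sub_rpow_neg_le (hγ : 0 ≤ γ) (z x : ℝ) :
    (1 + |z - x|) ^ (-γ) ≤ (1 + |z|) ^ γ * (1 + |x|) ^ (-γ) := by
  have hx : 1 + |x| ≤ (1 + |z|) * (1 + |z - x|) := by
    have := abs_sub_abs_le_abs_sub x z
    rw [abs_sub_comm x z] at this
    nlinarith [abs_nonneg z, abs_nonneg (z - x)]
  have hprod : (1 + |z|) ^ (-γ) * (1 + |z - x|) ^ (-γ) ≤ (1 + |x|) ^ (-γ) := by
    rw [← mul_rpow (by positivity) (by positivity)]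
    exact rpow_le_rpow_of_nonpos (by positivity) hx (neg_nonpos.mpr hγ)
  calc (1 + |z - x|) ^ (-γ)
        = (1 + |z|) ^ γ * ((1 + |z|) ^ (-γ) * (1 + |z - x|) ^ (-γ)) := by
        rw [← mul_assoc, ← rpow_add (by positivity), add_neg_cancel, rpow_zero, one_mul]
    _ ≤ (1 + |z|) ^ γ * (1 + |x|) ^ (-γ) := by gcongr

lemma isBigO_cocompact_one_add_abs_rpow_neg_of_tail_bound {g : ℝ → ℝ} {C K : ℝ}
    (hγ : 0 ≤ γ) (hg : ∀ x, 0 ≤ g x) (htail : ∀ x, C ≤ |x| → |x| ^ γ * g x ≤ K) :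
    g =O[cocompact ℝ] fun x => (1 + |x|) ^ (-γ) := by
  refine IsBigO.of_bound (K * 2 ^ γ) ?_
  filter_upwards [tendsto_norm_cocompact_atTop.eventually_ge_atTop (max C 1)] with x hx
  rw [Real.norm_eq_abs] at hx
  have hx0 : 0 < |x| := by linarith [le_max_right C 1]
  have hgx : g x ≤ K * |x| ^ (-γ) := by
    rw [rpow_neg hx0.le, ← div_eq_mul_inv, le_div_iff₀ (rpow_pos_of_pos hx0 γ), mul_comm]
    exact htail x ((le_max_left C 1).trans hx)
  have hK : 0 ≤ K :=
    (mul_nonneg (rpow_nonneg hx0.le γ) (hg x)).trans (htail x ((le_max_left C 1).trans hx))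
  rw [Real.norm_of_nonneg (hg x), Real.norm_of_nonneg (by positivity), mul_assoc]
  exact hgx.trans (mul_le_mul_of_nonneg_left
    (abs_rpow_neg_le_two_rpow_mul_one_add_abs_rpow_neg hγ ((le_max_right C 1).trans hx)) hK)

lemma Asymptotics.IsBigO.comp_sub_left_one_add_abs_rpow_neg {g : ℝ → ℝ} (hγ : 0 ≤ γ)
    (hg : g =O[cocompact ℝ] fun x => (1 + |x|) ^ (-γ)) (z : ℝ) :
    (fun x => g (z - x)) =O[cocompact ℝ] fun x => (1 + |x|) ^ (-γ) := by
  have hsub : Tendsto (fun x : ℝ => z - x) (cocompact ℝ) (cocompact ℝ) :=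
    (Homeomorph.subLeft z).map_cocompact.le
  refine (hg.comp_tendsto hsub).trans (IsBigO.of_bound ((1 + |z|) ^ γ) (Eventually.of_forall ?_))
  intro x
  rw [Function.comp_apply, Real.norm_of_nonneg (by positivity),
    Real.norm_of_nonneg (by positivity)]
  exact one_add_abs_sub_rpow_neg_le hγ z x

end JapaneseBracket

lemma integrable_abs_rpow_mul_of_isBigO {P : ℝ → ℝ} {q r : ℝ} (hq : 0 ≤ q)
    (hqr : q + 1 < r) (hP : Integrable P) (hPO : P =O[cocompact ℝ] fun x => (1 + |x|) ^ (-r)) :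
    Integrable fun x => |x| ^ q * P x := by
  have hloc : LocallyIntegrable fun x => |x| ^ q * P x := by
    rw [← locallyIntegrableOn_univ]
    exact hP.locallyIntegrable.locallyIntegrableOn univ |>.continuousOn_mul
      ((continuous_rpow_const hq).comp continuous_abs).continuousOn isClosed_univ.isLocallyClosed
  have hpow : (fun x : ℝ => |x| ^ q) =O[cocompact ℝ] fun x => (1 + |x|) ^ q :=
    IsBigO.of_bound 1 (Eventually.of_forall fun x => by
      rw [Real.norm_of_nonneg (by positivity), Real.norm_of_nonneg (by positivity), one_mul]
      exact rpow_le_rpow (abs_nonneg x) (by linarith) hq)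
  have hweight : (fun x : ℝ => (1 + |x|) ^ q * (1 + |x|) ^ (-r)) =
      fun x => (1 + ‖x‖) ^ (-(r - q)) := by
    ext x
    rw [← rpow_add (by positivity), Real.norm_eq_abs]
    ring_nf
  refine hloc.integrable_of_isBigO_cocompact (hpow.mul hPO) ?_
  rw [hweight]
  have hdim : (Module.finrank ℝ ℝ : ℝ) < r - q := by
    rw [Module.finrank_self, Nat.cast_one]
    linarith
  exact (integrable_one_add_norm hdim).integrableAtFilter _

theorem levy_bridge_moment_bound_general (f : ℝ → ℝ → ℝ) (T : ℝ)
    (hnonneg : ∀ t x, 0 ≤ f t x)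
    (hCK : ∀ s t : ℝ, 0 < s → s < t → t ≤ T →
      ∀ x : ℝ, f t x = ∫ u : ℝ, f (t - s) (x - u) * f s u)
    (C K β : ℝ)
    (hbound : ∀ t x : ℝ, 0 < t → t ≤ T → C ≤ |x| → |x| ^ (1 + β) * f t x < K)
    (α : ℝ) (hα0 : 0 < α) (hαβ : α < β)
    (t : ℝ) (ht : 0 < t) (htT : t < T)
    (z : ℝ) (hz : 0 < f T z) :
    Integrable (fun x : ℝ => |x| ^ (1 + 2 * α) * (f t x * f (T - t) (z - x) / f T z)) := by
  have hγ : 0 ≤ 1 + β := by linarith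
  have hdecay : ∀ s, 0 < s → s ≤ T → f s =O[cocompact ℝ] fun x => (1 + |x|) ^ (-(1 + β)) :=
    fun s hs hsT => isBigO_cocompact_one_add_abs_rpow_neg_of_tail_bound hγ (hnonneg s)
      fun x hx => (hbound s x hs hsT hx).le
  have hP : Integrable fun x => f t x * f (T - t) (z - x) := by
    have hconv : (∫ u, f (T - t) (z - u) * f t u) ≠ 0 := hCK t T ht htT le_rfl z ▸ hz.ne'
    simpa only [mul_comm] using Integrable.of_integral_ne_zero hconv
  have hPO : (fun x => f t x * f (T - t) (z - x)) =O[cocompact ℝ]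
      fun x => (1 + |x|) ^ (-(2 + 2 * β)) := by
    have hshift :=
      (hdecay (T - t) (by linarith) (by linarith)).comp_sub_left_one_add_abs_rpow_neg hγ z
    refine ((hdecay t ht htT.le).mul hshift).congr_right fun x => ?_
    rw [← rpow_add (by positivity)]
    ring_nf
  have hmoment :=
    integrable_abs_rpow_mul_of_isBigO (q := 1 + 2 * α) (by linarith) (by linarith) hP hPO
  simpa only [mul_div_assoc] using hmoment.div_const (f T z)

/-- If the marginal densities `f_t` of a Lévy process on `[0,T]` satisfy the uniform
tail bound `|x|^{1+β} f_t(x) < K` for `|x| ≥ C` and all `t ∈ (0,T]`, then the bridge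
marginal density `f_{tT}(x;z) = f_t(x) f_{T−t}(z−x)/f_T(z)` has a finite moment of
order `1 + 2α` for every `α ∈ (0,β)`. -/
theorem levy_bridge_moment_bound (f : ℝ → ℝ → ℝ) (T : ℝ) (hT : 0 < T)
    (hmeas : ∀ t, Measurable (f t))
    (hnonneg : ∀ t x, 0 ≤ f t x)
    (hdensity : ∀ t, 0 < t → t ≤ T → (∫ x : ℝ, f t x) = 1)
    (hCK : ∀ s t : ℝ, 0 < s → s < t → t ≤ T →
      ∀ x : ℝ, f t x = ∫ u : ℝ, f (t - s) (x - u) * f s u)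
    (C K β : ℝ) (hβ : 0 < β)
    (hbound : ∀ t x : ℝ, 0 < t → t ≤ T → C ≤ |x| → |x| ^ (1 + β) * f t x < K)
    (α : ℝ) (hα0 : 0 < α) (hαβ : α < β)
    (t : ℝ) (ht : 0 < t) (htT : t < T)
    (z : ℝ) (hz : 0 < f T z) :
    Integrable (fun x : ℝ => |x| ^ (1 + 2 * α) * (f t x * f (T - t) (z - x) / f T z)) :=
  levy_bridge_moment_bound_general f T hnonneg hCK C K β hbound α hα0 hαβ t ht htT z hz
end

section
/- Let {N_{tT}} be a Poisson random bridge on [0,T] with terminal mass function P having finite mean. Then the intensity of {N_{tT}} at time s given N_{sT} is λ_s = (E[N_{TT} | N_{sT}] − N_{sT})/(T − s); i.e., lim_{t→0⁺} ℚ[N_{s+t,T} − N_{sT} = 1 | N_{sT}]/t = (E[N_{TT}|N_{sT}] − N_{sT})/(T − s). -/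
open Real Filter Set

/-- The (unnormalised) conditional terminal weight of a Poisson random bridge:
given `N_{sT} = n`, the terminal value `k` has weight
`(k!/(k−n)!) (1 − s/T)^k P(k)` for `k ≥ n`. -/
noncomputable def prbWeight (P : ℕ → ℝ) (T s : ℝ) (n k : ℕ) : ℝ :=
  if n ≤ k then ((k.factorial : ℝ) / ((k - n).factorial : ℝ)) * (1 - s / T) ^ k * P k
  else 0

/-- The conditional terminal probability mass function `P_s` of a Poisson random bridge
given `N_{sT} = n`. -/
noncomputable def prbCondPMF (P : ℕ → ℝ) (T s : ℝ) (n : ℕ) (k : ℕ) : ℝ :=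
  prbWeight P T s n k / ∑' j : ℕ, prbWeight P T s n j

/-- Probability generating function of a mass function on `ℕ`. -/
noncomputable def pgf (Q : ℕ → ℝ) (z : ℝ) : ℝ := ∑' k : ℕ, z ^ k * Q k

/-- Mean of a mass function on `ℕ`. -/
noncomputable def pmfMean (Q : ℕ → ℝ) : ℝ := ∑' k : ℕ, (k : ℝ) * Q k

/-! Since `Q = P_s` vanishes below `n`, `r⁻ⁿ G_Q(r)` is the generating function of the shifted
mass function `R k = Q (k + n)`, whose mean is `E[Q] − n`. With `r = 1 − t/(T − s)` the claim
becomes: the left derivative at `1` of a generating function with finite mean is the mean. This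
follows by dominated convergence from `(1 − zᵏ)/(1 − z) = 1 + z + ⋯ + zᵏ⁻¹ ∈ [0, k]` on `[0, 1)`.
Finiteness of the mean of `Q` comes from the geometric factor `(1 − s/T)ᵏ`, `0 < s < T`. -/

open Topology Finset

lemma tsum_comp_add_eq_of_eq_zero_of_lt {α : Type*} [AddCommMonoid α] [TopologicalSpace α]
    {f : ℕ → α} {n : ℕ} (hf : ∀ k < n, f k = 0) : ∑' k, f (k + n) = ∑' k, f k :=
  (add_left_injective n).tsum_eq fun k hk =>
    ⟨k - n, Nat.sub_add_cancel (not_lt.1 fun h => hk (hf k h))⟩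

lemma summable_of_summable_natCast_mul {Q : ℕ → ℝ}
    (hQ : Summable fun k : ℕ => (k : ℝ) * Q k) : Summable Q := by
  refine (summable_nat_add_iff 1).1 <|
    ((summable_nat_add_iff 1).2 hQ).norm.of_norm_bounded fun k => ?_
  rw [norm_mul, Real.norm_natCast]
  exact le_mul_of_one_le_left (norm_nonneg _) (mod_cast Nat.le_add_left 1 k)

lemma tendsto_slope_pgf_one {Q : ℕ → ℝ} (hQ : Summable fun k : ℕ => (k : ℝ) * Q k) :
    Tendsto (slope (pgf Q) 1) (𝓝[<] 1) (𝓝 (pmfMean Q)) := by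
  have h_geom : ∀ k : ℕ, Tendsto (fun z : ℝ => (∑ i ∈ range k, z ^ i) * Q k) (𝓝[<] 1)
      (𝓝 (k * Q k)) := fun k => by
    have : Continuous fun z : ℝ => (∑ i ∈ range k, z ^ i) * Q k := by fun_prop
    simpa using (this.tendsto 1).mono_left nhdsWithin_le_nhds
  have h_bound : ∀ᶠ z in 𝓝[<] (1 : ℝ), ∀ k : ℕ,
      ‖(∑ i ∈ range k, z ^ i) * Q k‖ ≤ ‖(k : ℝ) * Q k‖ := by
    filter_upwards [Ioo_mem_nhdsLT one_pos] with z hz k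
    rw [norm_mul, norm_mul]
    gcongr
    calc ‖∑ i ∈ range k, z ^ i‖ ≤ ∑ i ∈ range k, ‖z‖ ^ i :=
          norm_sum_le_of_le _ fun i _ => (norm_pow z i).le
      _ ≤ ∑ i ∈ range k, 1 := sum_le_sum fun i _ =>
          pow_le_one₀ (norm_nonneg z) (by rw [Real.norm_of_nonneg hz.1.le]; exact hz.2.le)
      _ = ‖(k : ℝ)‖ := by simp
  refine (tendsto_tsum_of_dominated_convergence hQ.norm h_geom h_bound).congr' ?_
  filter_upwards [Ioo_mem_nhdsLT one_pos] with z hz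
  have hQ₀ := summable_of_summable_natCast_mul hQ
  have hz_summable : Summable fun k => z ^ k * Q k :=
    hQ₀.norm.of_norm_bounded fun k => by
      rw [norm_mul, norm_pow, Real.norm_of_nonneg hz.1.le]
      exact mul_le_of_le_one_left (norm_nonneg _) (pow_le_one₀ hz.1.le hz.2.le)
  rw [slope_def_field, pgf, pgf, ← hz_summable.tsum_sub (by simpa using hQ₀),
    ← tsum_div_const]
  congr with k
  rw [geom_sum_eq hz.2.ne, one_pow]
  ring

lemma tendsto_pgf_one_sub_pgf_div {Q : ℕ → ℝ} (hQ : Summable fun k : ℕ => (k : ℝ) * Q k)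
    {c : ℝ} (hc : 0 < c) :
    Tendsto (fun t => (pgf Q 1 - pgf Q (1 - t / c)) / t) (𝓝[>] 0) (𝓝 (pmfMean Q / c)) := by
  have h_lin : Tendsto (fun t : ℝ => 1 - t / c) (𝓝[>] 0) (𝓝[<] 1) := by
    refine tendsto_nhdsWithin_of_tendsto_nhds_of_eventually_within _ ?_ ?_
    · have : Continuous fun t : ℝ => 1 - t / c := by fun_prop
      simpa using (this.tendsto 0).mono_left nhdsWithin_le_nhds
    · filter_upwards [self_mem_nhdsWithin] with t ht
      simpa using div_pos ht hc
  refine (((tendsto_slope_pgf_one hQ).comp h_lin).div_const c).congr' ?_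
  filter_upwards [self_mem_nhdsWithin] with t ht
  have ht₀ : t ≠ 0 := ht.ne'
  rw [Function.comp_apply, slope_def_field, sub_sub_cancel_left]
  field_simp
  ring

lemma pgf_eq_pow_mul_pgf_comp_add {Q : ℕ → ℝ} {n : ℕ} (hQ : ∀ k < n, Q k = 0) (z : ℝ) :
    pgf Q z = z ^ n * pgf (fun k => Q (k + n)) z := by
  rw [pgf, pgf, ← tsum_mul_left,
    ← tsum_comp_add_eq_of_eq_zero_of_lt (f := fun k => z ^ k * Q k) fun k hk => by simp [hQ k hk]]
  congr with k
  ring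

lemma summable_natCast_mul_comp_add {Q : ℕ → ℝ} (hQ : Summable fun k : ℕ => (k : ℝ) * Q k)
    (n : ℕ) : Summable fun k : ℕ => (k : ℝ) * Q (k + n) := by
  refine (((summable_nat_add_iff n).2 hQ).sub
    (((summable_nat_add_iff n).2 (summable_of_summable_natCast_mul hQ)).mul_left (n : ℝ))).congr
    fun k => ?_
  push_cast
  ring

lemma pmfMean_comp_add {Q : ℕ → ℝ} {n : ℕ} (hQ : ∀ k < n, Q k = 0)
    (hmean : Summable fun k : ℕ => (k : ℝ) * Q k) :
    pmfMean (fun k => Q (k + n)) = pmfMean Q - n * ∑' k, Q k := by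
  have hshift := (summable_nat_add_iff n).2 (summable_of_summable_natCast_mul hmean)
  rw [pmfMean, pmfMean, ← tsum_comp_add_eq_of_eq_zero_of_lt (f := fun k => (k : ℝ) * Q k)
      fun k hk => by simp [hQ k hk], ← tsum_comp_add_eq_of_eq_zero_of_lt hQ, ← tsum_mul_left,
    ← ((summable_nat_add_iff n).2 hmean).tsum_sub (hshift.mul_left _)]
  congr with k
  push_cast
  ring

lemma prbCondPMF_eq_zero_of_lt {P : ℕ → ℝ} {T s : ℝ} {n k : ℕ} (h : k < n) :
    prbCondPMF P T s n k = 0 := by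
  simp [prbCondPMF, prbWeight, not_le.2 h]

lemma tsum_prbCondPMF {P : ℕ → ℝ} {T s : ℝ} {n : ℕ}
    (hD : ∑' j : ℕ, prbWeight P T s n j ≠ 0) : ∑' k, prbCondPMF P T s n k = 1 := by
  simp only [prbCondPMF]
  rw [tsum_div_const, div_self hD]

lemma norm_prbWeight_le (P : ℕ → ℝ) (T s : ℝ) (n k : ℕ) :
    ‖prbWeight P T s n k‖ ≤ (k : ℝ) ^ n * ‖(1 - s / T) ^ k * P k‖ := by
  unfold prbWeight
  split_ifs with h
  · have h_desc : (k.factorial : ℝ) / ((k - n).factorial : ℝ) = k.descFactorial n := by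
      rw [← Nat.factorial_mul_descFactorial h]
      push_cast
      field_simp
    rw [mul_assoc, norm_mul, h_desc, Real.norm_natCast]
    gcongr
    exact_mod_cast Nat.descFactorial_le_pow k n
  · simp only [norm_zero]
    positivity

lemma summable_pow_mul_geometric_mul {r : ℝ} (hr : |r| < 1) {P : ℕ → ℝ} (hP : Summable P)
    (j : ℕ) : Summable fun k : ℕ => (k : ℝ) ^ j * (r ^ k * P k) := by
  obtain ⟨M, hM⟩ := (tendsto_pow_const_mul_const_pow_of_abs_lt_one j hr).norm.bddAbove_range
  refine (hP.norm.mul_left M).of_norm_bounded fun k => ?_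
  rw [← mul_assoc, norm_mul]
  gcongr
  exact hM ⟨k, rfl⟩

lemma summable_natCast_mul_prbWeight {P : ℕ → ℝ} (hP : Summable P) {T s : ℝ} (hs : 0 < s)
    (hsT : s < T) (n : ℕ) : Summable fun k : ℕ => (k : ℝ) * prbWeight P T s n k := by
  have hT : 0 < T := hs.trans hsT
  have hr : |1 - s / T| < 1 := by
    rw [abs_lt]
    constructor <;> linarith [div_pos hs hT, (div_lt_one hT).2 hsT]
  refine (summable_pow_mul_geometric_mul hr hP (n + 1)).norm.of_norm_bounded fun k => ?_
  calc ‖(k : ℝ) * prbWeight P T s n k‖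
      ≤ ‖(k : ℝ)‖ * ((k : ℝ) ^ n * ‖(1 - s / T) ^ k * P k‖) := by
        rw [norm_mul]
        gcongr
        exact norm_prbWeight_le P T s n k
    _ = ‖(k : ℝ) ^ (n + 1) * ((1 - s / T) ^ k * P k)‖ := by
        simp only [norm_mul, norm_pow, Real.norm_natCast]
        ring

lemma summable_natCast_mul_prbCondPMF {P : ℕ → ℝ} (hP : Summable P) {T s : ℝ} (hs : 0 < s)
    (hsT : s < T) (n : ℕ) : Summable fun k : ℕ => (k : ℝ) * prbCondPMF P T s n k := by
  simpa [prbCondPMF, mul_div_assoc] using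
    (summable_natCast_mul_prbWeight hP hs hsT n).div_const (∑' j : ℕ, prbWeight P T s n j)

theorem poisson_random_bridge_intensity_general (P : ℕ → ℝ)
    (hsum : Summable P)
    (T s : ℝ) (hs : 0 < s) (hsT : s < T) (n : ℕ)
    (hD : 0 < ∑' j : ℕ, prbWeight P T s n j) :
    Tendsto
      (fun t : ℝ =>
        (1 - ((T - s) / (T - s - t)) ^ n *
            pgf (prbCondPMF P T s n) ((T - s - t) / (T - s))) / t)
      (nhdsWithin 0 (Set.Ioi 0))
      (nhds ((pmfMean (prbCondPMF P T s n) - n) / (T - s))) := by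
  set Q := prbCondPMF P T s n
  set R : ℕ → ℝ := fun k => Q (k + n)
  have hc : 0 < T - s := sub_pos.2 hsT
  have hQ_low : ∀ k < n, Q k = 0 := fun k hk => prbCondPMF_eq_zero_of_lt hk
  have hQ_mean := summable_natCast_mul_prbCondPMF hsum hs hsT n
  have hQ_one : ∑' k, Q k = 1 := tsum_prbCondPMF hD.ne'
  have hR_one : pgf R 1 = 1 := by
    have h := pgf_eq_pow_mul_pgf_comp_add hQ_low 1
    rw [one_pow, one_mul] at h
    rw [← h]
    simpa [pgf] using hQ_one
  have hR_mean : pmfMean R = pmfMean Q - n := by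
    rw [pmfMean_comp_add hQ_low hQ_mean, hQ_one, mul_one]
  rw [← hR_mean]
  refine (tendsto_pgf_one_sub_pgf_div (summable_natCast_mul_comp_add hQ_mean n) hc).congr' ?_
  filter_upwards [Ioo_mem_nhdsGT hc] with t ht
  have hz : (T - s - t) / (T - s) = 1 - t / (T - s) := by field_simp
  have hz₀ : 1 - t / (T - s) ≠ 0 := by
    rw [← hz]; exact (div_pos (by linarith [ht.2]) hc).ne'
  have h_inv : (T - s) / (T - s - t) = (1 - t / (T - s))⁻¹ := by rw [← hz, inv_div]
  rw [hR_one, hz, h_inv, pgf_eq_pow_mul_pgf_comp_add hQ_low, ← mul_assoc, ← mul_pow,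
    inv_mul_cancel₀ hz₀, one_pow, one_mul]

/-- The intensity of a Poisson random bridge at time `s`, given `N_{sT} = n`, is
`(E[N_{TT} | N_{sT}] − N_{sT})/(T − s)`: the probability of a jump in `(s, s+t]`
given `N_{sT} = n`, which equals
`1 − ((T−s)/(T−s−t))^n G_{P_s}((T−s−t)/(T−s))`, divided by `t`, tends to
`(E[N_{TT} | N_{sT} = n] − n)/(T − s)` as `t → 0⁺`. -/
theorem poisson_random_bridge_intensity (P : ℕ → ℝ)
    (hnonneg : ∀ k, 0 ≤ P k) (hsum : Summable P) (hone : (∑' k : ℕ, P k) = 1)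
    (hmean : Summable fun k : ℕ => (k : ℝ) * P k)
    (T s : ℝ) (hT : 0 < T) (hs : 0 < s) (hsT : s < T) (n : ℕ)
    (hD : 0 < ∑' j : ℕ, prbWeight P T s n j) :
    Tendsto
      (fun t : ℝ =>
        (1 - ((T - s) / (T - s - t)) ^ n *
            pgf (prbCondPMF P T s n) ((T - s - t) / (T - s))) / t)
      (nhdsWithin 0 (Set.Ioi 0))
      (nhds ((pmfMean (prbCondPMF P T s n) - n) / (T - s))) :=
  poisson_random_bridge_intensity_general P hsum T s hs hsT n hD
end

section
/- Let {N_{tT}} be a Poisson random bridge on [0,T] whose terminal value has the negative binomial distribution P(k) = C(k+m−1, k) p^m (1−p)^k for k ∈ ℕ₀, with m > 0 and 0 < p < 1. Then for 0 ≤ s < t < T and 0 ≤ i ≤ j, ℚ[N_{tT} = j | N_{sT} = i] = C(j+m−1, j−i) [ (p + (s/T)(1−p)) / (p + (t/T)(1−p)) ]^{i+m} [ ((t−s)/T)(1−p) / (p + (t/T)(1−p)) ]^{j−i}. In particular every increment of the process has a negative binomial distribution. -/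
open Real

/-- Negative binomial mass function with parameters `m > 0` and `0 < p < 1`,
`P(k) = C(k+m−1, k) p^m (1−p)^k`, where the generalized binomial coefficient is
expressed via Gamma functions. -/
noncomputable def negBinPMF (m p : ℝ) (k : ℕ) : ℝ :=
  (Real.Gamma ((k : ℝ) + m) / (Real.Gamma ((k : ℝ) + 1) * Real.Gamma m)) *
    p ^ m * (1 - p) ^ k

/-- Poisson increment mass function `Q_t(n) = e^{−λt}(λt)^n/n!`. -/
noncomputable def poissonPMF (lam t : ℝ) (n : ℕ) : ℝ :=
  Real.exp (-(lam * t)) * (lam * t) ^ n / (n.factorial : ℝ)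

/-- The weight `φ_t(k;j) = Q_{T−t}(k−j) P(k)/Q_T(k)` appearing in the transition law of
a Lévy (Poisson) random bridge, zero unless `j ≤ k`. -/
noncomputable def prbPhi (lam T : ℝ) (P : ℕ → ℝ) (t : ℝ) (k j : ℕ) : ℝ :=
  if j ≤ k then poissonPMF lam (T - t) (k - j) * P k / poissonPMF lam T k else 0

/-!
Put `k = j + n`. Then `φ_u(j + n; j)` is `e^{λu} p^m / Γ(m) · ((1 - p)/(λT))^j` times
`Γ(j + m + n)/n! · x^n` with `x = (1 - u/T)(1 - p)`, so `∑_k φ_u(k; j)` is a binomial series and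
equals `Γ(j + m) (1 - x)^{-(j + m)}`, where `1 - x = p + (u/T)(1 - p)`. The transition
probability is a ratio of two such closed forms times a Poisson weight, in which the
exponentials cancel and the powers of `λ` recombine into the stated negative binomial law.
-/

theorem Real.Gamma_add_nat_div_Gamma_eq {n : ℕ} (x : ℝ) (hx : ∀ k : ℕ, x ≠ -k) :
    Gamma (x + n) / Gamma x = (ascPochhammer ℝ n).eval x := by
  induction n with
  | zero => simp [div_self (Gamma_ne_zero hx)]
  | succ n ih =>
    have hxn : x + n ≠ 0 := fun h => hx n (by linarith)
    rw [ascPochhammer_succ_eval, ← ih, Nat.cast_succ, ← add_assoc, Gamma_add_one hxn]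
    ring

theorem Ring.choose_add_sub_one_eq_Gamma_div (a : ℝ) (ha : ∀ k : ℕ, a ≠ -k) (n : ℕ) :
    Ring.choose (a + n - 1) n = Gamma (a + n) / (Gamma a * n.factorial) := by
  rw [Ring.choose_eq_smul, Polynomial.descPochhammer_smeval_eq_ascPochhammer,
    Polynomial.ascPochhammer_smeval_eq_eval,
    show a + n - 1 - n + 1 = a by ring, ← Gamma_add_nat_div_Gamma_eq a ha, smul_eq_mul]
  field_simp

theorem Real.hasSum_Gamma_div_factorial_mul_pow {a x : ℝ} (ha : ∀ k : ℕ, a ≠ -k) (hx : |x| < 1) :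
    HasSum (fun n : ℕ => Gamma (a + n) / n.factorial * x ^ n) (Gamma a * (1 - x) ^ (-a)) := by
  have h := (one_div_one_sub_rpow_hasFPowerSeriesOnBall_zero a).hasSum
    (y := x) (by simpa [← NNReal.coe_lt_one, enorm_eq_nnnorm] using hx)
  simp only [FormalMultilinearSeries.ofScalars_apply_eq, Ring.choose_add_sub_one_eq_Gamma_div a ha,
    smul_eq_mul, zero_add] at h
  have hΓ : Gamma a ≠ 0 := Gamma_ne_zero ha
  rw [rpow_neg (by linarith [abs_lt.1 hx]), ← one_div]
  have hterm (n : ℕ) : Gamma a * (Gamma (a + n) / (Gamma a * n.factorial) * x ^ n)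
      = Gamma (a + n) / n.factorial * x ^ n := by
    field_simp
  simpa only [hterm] using h.mul_left (Gamma a)

theorem tsum_prbPhi_eq_tsum_add (lam T : ℝ) (P : ℕ → ℝ) (u : ℝ) (j : ℕ) :
    ∑' k, prbPhi lam T P u k j = ∑' n, prbPhi lam T P u (j + n) j := by
  refine ((add_right_injective j).tsum_eq fun k hk => ?_).symm
  by_contra hj
  exact hk (if_neg fun hjk => hj ⟨k - j, Nat.add_sub_cancel' hjk⟩)

theorem prbPhi_negBinPMF_add {lam T : ℝ} (hlam : lam ≠ 0) (hT : T ≠ 0) (m p u : ℝ) (j n : ℕ) :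
    prbPhi lam T (negBinPMF m p) u (j + n) j
      = exp (lam * u) * p ^ m / Gamma m * ((1 - p) / (lam * T)) ^ j *
          (Gamma ((j + m) + n) / n.factorial * ((T - u) * (1 - p) / T) ^ n) := by
  have hexp : exp (-(lam * (T - u))) = exp (lam * u) * exp (-(lam * T)) := by
    rw [← exp_add]; ring_nf
  have harg : ((j + n : ℕ) : ℝ) + m = (j + m) + n := by push_cast; ring
  rw [prbPhi, if_pos (Nat.le_add_right j n), Nat.add_sub_cancel_left, negBinPMF, poissonPMF,
    poissonPMF, Gamma_nat_eq_factorial, harg, hexp]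
  simp only [div_pow, mul_pow, pow_add]
  field_simp

theorem tsum_prbPhi_negBinPMF {lam T m p u : ℝ} (hlam : lam ≠ 0) (hT : 0 < T) (hm : 0 < m)
    (hp0 : 0 < p) (hp1 : p < 1) (hu0 : 0 ≤ u) (huT : u < T) (j : ℕ) :
    ∑' k, prbPhi lam T (negBinPMF m p) u k j
      = exp (lam * u) * p ^ m / Gamma m * ((1 - p) / (lam * T)) ^ j *
          (Gamma (j + m) * (p + u / T * (1 - p)) ^ (-(j + m : ℝ))) := by
  have hx : |(T - u) * (1 - p) / T| < 1 := by
    rw [abs_lt, lt_div_iff₀ hT, div_lt_one hT]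
    constructor <;> nlinarith
  have hjm (k : ℕ) : (j + m : ℝ) ≠ -k :=
    ((neg_nonpos.2 k.cast_nonneg).trans_lt (by positivity)).ne'
  rw [tsum_prbPhi_eq_tsum_add, tsum_congr (prbPhi_negBinPMF_add hlam hT.ne' m p u j), tsum_mul_left,
    (hasSum_Gamma_div_factorial_mul_pow hjm hx).tsum_eq]
  congr 3
  field_simp
  ring

/-- A Poisson random bridge whose terminal value has a negative binomial distribution
has negative binomial transition probabilities (and hence negative binomial
increments): for `0 ≤ s < t < T` and `i ≤ j`,
`ℚ[N_{tT} = j | N_{sT} = i]`, which equals `(∑_k φ_t(k;j)/∑_k φ_s(k;i)) Q_{t−s}(j−i)`,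
is given by
`C(j+m−1, j−i) [(p+(s/T)(1−p))/(p+(t/T)(1−p))]^{i+m} [((t−s)/T)(1−p)/(p+(t/T)(1−p))]^{j−i}`. -/
theorem poisson_random_bridge_negative_binomial (lam T s t m p : ℝ)
    (hlam : 0 < lam) (hT : 0 < T) (hs : 0 ≤ s) (hst : s < t) (htT : t < T)
    (hm : 0 < m) (hp0 : 0 < p) (hp1 : p < 1)
    (i j : ℕ) (hij : i ≤ j) :
    ((∑' k, prbPhi lam T (negBinPMF m p) t k j) /
        (∑' k, prbPhi lam T (negBinPMF m p) s k i)) * poissonPMF lam (t - s) (j - i)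
      = (Real.Gamma ((j : ℝ) + m) /
            (Real.Gamma ((j : ℝ) - (i : ℝ) + 1) * Real.Gamma ((i : ℝ) + m))) *
          ((p + (s / T) * (1 - p)) / (p + (t / T) * (1 - p))) ^ ((i : ℝ) + m) *
          (((t - s) / T * (1 - p)) / (p + (t / T) * (1 - p))) ^ (j - i) := by
  obtain ⟨d, rfl⟩ := Nat.exists_eq_add_of_le hij
  have h1p : 0 < 1 - p := sub_pos.2 hp1
  have hAs : 0 < p + s / T * (1 - p) := by positivity
  have ht : 0 ≤ t := hs.trans hst.le
  have hAt : 0 < p + t / T * (1 - p) := by positivity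
  have hsplit : (p + t / T * (1 - p)) ^ (-((i + d : ℕ) + m : ℝ))
      = ((p + t / T * (1 - p)) ^ ((i : ℝ) + m))⁻¹ * ((p + t / T * (1 - p)) ^ d)⁻¹ := by
    rw [← rpow_natCast, ← rpow_neg hAt.le, ← rpow_neg hAt.le, ← rpow_add hAt]
    push_cast; ring_nf
  have hexp : exp (lam * t) = exp (lam * s) * exp (lam * (t - s)) := by
    rw [← exp_add]; ring_nf
  rw [tsum_prbPhi_negBinPMF hlam.ne' hT hm hp0 hp1 ht htT,
    tsum_prbPhi_negBinPMF hlam.ne' hT hm hp0 hp1 hs (hst.trans htT), hsplit, rpow_neg hAs.le,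
    div_rpow hAs.le hAt.le, poissonPMF, Nat.add_sub_cancel_left,
    show ((i + d : ℕ) : ℝ) - i + 1 = d + 1 by push_cast; ring, Gamma_nat_eq_factorial, hexp,
    exp_neg]
  have hΓ := Gamma_pos_of_pos (show 0 < (i : ℝ) + m by positivity)
  generalize p + s / T * (1 - p) = As at hAs ⊢
  generalize p + t / T * (1 - p) = At at hAt ⊢
  simp only [div_pow, mul_pow, pow_add]
  field_simp
end
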